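/- arXiv:1704.01520 — 3 statements merged into one kernel-verified Lean document; each statement's English description precedes it below -/
import Mathlib

section
/- Let ω : (0,1] → [0,∞) be a bounded function, κ ∈ (0,1), β ∈ (0,1), and define ω̃(t) = Σ_{i=1}^∞ κ^{iβ} ( ω(κ^{−i}t) if κ^{−i}t ≤ 1, else ω(1) ). If ω is a Dini function (satisfies the doubling-type condition and ∫₀¹ ω(s)/s ds < ∞), then ω̃ is also a Dini function; in particular ∫₀¹ ω̃(s)/s ds < ∞. -/
/-!
Writing the `if` as a truncation, the `i`-th summand of `ω̃` is `κ^{(i+1)β} ω(min(t / κ^{i+1}, 1))`.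
Each truncated dilate `t ↦ ω(min(t / a, 1))` satisfies the doubling condition with the constants
of `ω`, and the substitution `s = a u` gives
`∫₀¹ ω(min(s / a, 1)) / s ds = ∫₀¹ ω(u) / u du + ω(1) log(1 / a)`.
With `a = κ^{i+1}` these integrals grow linearly in `i`, so against the geometric weights
`κ^{(i+1)β}` they are summable and the series converges in `L¹(0, 1)`. For fixed `t > 0` all but
finitely many summands equal `κ^{(i+1)β} ω(1)`, so the series also converges pointwise and the
doubling inequalities pass to the sum term by term.
-/

open MeasureTheory Set

/-- `ω` is a Dini function on `(0, 1]`. -/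
def IsDini (ω : ℝ → ℝ) : Prop :=
  (∀ t ∈ Set.Ioc (0:ℝ) 1, 0 ≤ ω t) ∧
  (∃ c₁ c₂ : ℝ, 0 < c₁ ∧ 0 < c₂ ∧ ∀ t s : ℝ, 0 < t → t ≤ 1 → t / 2 ≤ s → s ≤ t →
    c₁ * ω t ≤ ω s ∧ ω s ≤ c₂ * ω t) ∧
  ∀ t ∈ Set.Ioc (0:ℝ) 1, IntegrableOn (fun s => ω s / s) (Set.Ioo 0 t)

open Filter Topology

theorem MeasureTheory.integrable_tsum_of_summable_integral_norm {α E ι : Type*}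
    [MeasurableSpace α] {μ : Measure α} [NormedAddCommGroup E] [CompleteSpace E] [Countable ι]
    {F : ι → α → E} (hF_int : ∀ i, Integrable (F i) μ)
    (hF_sum : Summable fun i ↦ ∫ a, ‖F i a‖ ∂μ) :
    Integrable (fun a ↦ ∑' i, F i a) μ := by
  set f : ι → α →₁[μ] E := fun i ↦ (hF_int i).toL1 (F i)
  have hf : ∑' i, ‖f i‖ₑ ≠ ⊤ := by
    refine tsum_enorm_ne_top_iff_summable_norm.2 (hF_sum.congr fun i ↦ ?_)
    rw [L1.norm_of_fun_eq_integral_norm]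
  refine (L1.integrable_coeFn (∑' i, f i)).congr ?_
  filter_upwards [Lp.coeFn_tsum hf, ae_all_iff.2 fun i ↦ (hF_int i).coeFn_toL1] with x hx hFx
  rw [hx]
  exact tsum_congr hFx

def IsDoubling (c₁ c₂ : ℝ) (ω : ℝ → ℝ) : Prop :=
  ∀ t s : ℝ, 0 < t → t ≤ 1 → t / 2 ≤ s → s ≤ t → c₁ * ω t ≤ ω s ∧ ω s ≤ c₂ * ω t

namespace IsDoubling

variable {c₁ c₂ : ℝ}

theorem congr {f g : ℝ → ℝ} (hf : IsDoubling c₁ c₂ f) (hfg : EqOn f g (Ioc 0 1)) :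
    IsDoubling c₁ c₂ g := by
  intro t s ht0 ht1 hts hst
  have hs0 : 0 < s := by linarith
  rw [← hfg ⟨ht0, ht1⟩, ← hfg ⟨hs0, hst.trans ht1⟩]
  exact hf t s ht0 ht1 hts hst

theorem const_mul {f : ℝ → ℝ} (hf : IsDoubling c₁ c₂ f) {w : ℝ} (hw : 0 ≤ w) :
    IsDoubling c₁ c₂ (fun t ↦ w * f t) := by
  intro t s ht0 ht1 hts hst
  obtain ⟨h₁, h₂⟩ := hf t s ht0 ht1 hts hst
  constructor
  · calc c₁ * (w * f t) = w * (c₁ * f t) := by ring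
      _ ≤ w * f s := by gcongr
  · calc w * f s ≤ w * (c₂ * f t) := by gcongr
      _ = c₂ * (w * f t) := by ring

theorem tsum {ι : Type*} {f : ι → ℝ → ℝ} (hf : ∀ i, IsDoubling c₁ c₂ (f i))
    (hsum : ∀ t ∈ Ioc (0 : ℝ) 1, Summable fun i ↦ f i t) :
    IsDoubling c₁ c₂ (fun t ↦ ∑' i, f i t) := by
  intro t s ht0 ht1 hts hst
  have hs : Summable fun i ↦ f i s := hsum s ⟨by linarith, hst.trans ht1⟩
  have ht : Summable fun i ↦ f i t := hsum t ⟨ht0, ht1⟩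
  rw [← tsum_mul_left, ← tsum_mul_left]
  exact ⟨(ht.mul_left c₁).tsum_le_tsum (fun i ↦ (hf i t s ht0 ht1 hts hst).1) hs,
    hs.tsum_le_tsum (fun i ↦ (hf i t s ht0 ht1 hts hst).2) (ht.mul_left c₂)⟩

theorem comp_min_div {ω : ℝ → ℝ} (hω : IsDoubling c₁ c₂ ω) {a : ℝ} (ha : 0 < a) :
    IsDoubling c₁ c₂ (fun t ↦ ω (min (t / a) 1)) := by
  intro t s ht0 _ hts hst
  refine hω _ _ (lt_min (div_pos ht0 ha) one_pos) (min_le_right _ _) (le_min ?_ ?_)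
    (min_le_min_right _ (div_le_div_of_nonneg_right hst ha.le))
  · calc min (t / a) 1 / 2 ≤ t / a / 2 := by gcongr; exact min_le_left _ _
      _ ≤ s / a := by rw [div_right_comm]; gcongr
  · linarith [min_le_right (t / a) 1]

end IsDoubling

theorem IsDini.congr {f g : ℝ → ℝ} (hf : IsDini f) (hfg : EqOn f g (Ioc 0 1)) : IsDini g := by
  obtain ⟨hnn, ⟨c₁, c₂, hc₁, hc₂, hdoub⟩, hint⟩ := hf
  refine ⟨fun t ht ↦ hfg ht ▸ hnn t ht, ⟨c₁, c₂, hc₁, hc₂, IsDoubling.congr hdoub hfg⟩,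
    fun t ht ↦ (hint t ht).congr_fun (fun s hs ↦ ?_) measurableSet_Ioo⟩
  simp only [hfg ⟨hs.1, hs.2.le.trans ht.2⟩]

section Dilation

variable {ω : ℝ → ℝ} {a : ℝ}

theorem min_div_one_mem_Ioc {t : ℝ} (ht : 0 < t) (ha : 0 < a) : min (t / a) 1 ∈ Ioc 0 1 :=
  ⟨lt_min (div_pos ht ha) one_pos, min_le_right _ _⟩

theorem eqOn_comp_min_div_div_Ioc_zero (ha : 0 < a) :
    EqOn (fun s ↦ ω (min (s / a) 1) / s) (fun s ↦ a⁻¹ * (ω (s / a) / (s / a))) (Ioc 0 a) := by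
  intro s hs
  simp only [min_eq_left ((div_le_one ha).2 hs.2)]
  field_simp

theorem eqOn_comp_min_div_div_Icc_one (ha : 0 < a) :
    EqOn (fun s ↦ ω (min (s / a) 1) / s) (fun s ↦ ω 1 * s⁻¹) (Icc a 1) := by
  intro s hs
  simp only [min_eq_right ((one_le_div ha).2 hs.1)]
  rw [div_eq_mul_inv]

theorem intervalIntegrable_comp_min_div_div_zero
    (hω : IntervalIntegrable (fun u ↦ ω u / u) volume 0 1) (ha : 0 < a) :
    IntervalIntegrable (fun s ↦ ω (min (s / a) 1) / s) volume 0 a := by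
  have h := (hω.comp_mul_right (c := a⁻¹)).const_mul a⁻¹
  simp only [zero_div, one_div, inv_inv, ← div_eq_mul_inv] at h
  refine h.congr ?_
  rw [uIoc_of_le ha.le]
  exact (eqOn_comp_min_div_div_Ioc_zero ha).symm

theorem intervalIntegrable_comp_min_div_div_one (ha0 : 0 < a) (ha1 : a ≤ 1) :
    IntervalIntegrable (fun s ↦ ω (min (s / a) 1) / s) volume a 1 := by
  refine IntervalIntegrable.congr ?_ ((intervalIntegral.intervalIntegrable_inv
    (fun s hs ↦ ?_) continuousOn_id).const_mul (ω 1))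
  · rw [uIoc_of_le ha1]
    exact (eqOn_comp_min_div_div_Icc_one ha0).symm.mono Ioc_subset_Icc_self
  · rw [uIcc_of_le ha1] at hs
    exact (ha0.trans_le hs.1).ne'

theorem intervalIntegrable_comp_min_div_div
    (hω : IntervalIntegrable (fun u ↦ ω u / u) volume 0 1) (ha0 : 0 < a) (ha1 : a ≤ 1) :
    IntervalIntegrable (fun s ↦ ω (min (s / a) 1) / s) volume 0 1 :=
  (intervalIntegrable_comp_min_div_div_zero hω ha0).trans
    (intervalIntegrable_comp_min_div_div_one ha0 ha1)

theorem integral_comp_min_div_div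
    (hω : IntervalIntegrable (fun u ↦ ω u / u) volume 0 1) (ha0 : 0 < a) (ha1 : a ≤ 1) :
    ∫ s in 0..1, ω (min (s / a) 1) / s = (∫ u in 0..1, ω u / u) - ω 1 * Real.log a := by
  have hleft : ∫ s in 0..a, ω (min (s / a) 1) / s = ∫ u in 0..1, ω u / u := by
    rw [intervalIntegral.integral_congr_ae (g := fun s ↦ a⁻¹ * (ω (s / a) / (s / a)))
        (.of_forall fun s hs ↦
          eqOn_comp_min_div_div_Ioc_zero ha0 (by rwa [uIoc_of_le ha0.le] at hs)),
      intervalIntegral.integral_const_mul,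
      intervalIntegral.integral_comp_div (fun u ↦ ω u / u) ha0.ne', zero_div, div_self ha0.ne',
      smul_eq_mul, inv_mul_cancel_left₀ ha0.ne']
  have hright : ∫ s in a..1, ω (min (s / a) 1) / s = -(ω 1 * Real.log a) := by
    rw [intervalIntegral.integral_congr (g := fun s ↦ ω 1 * s⁻¹)
        (by rw [uIcc_of_le ha1]; exact eqOn_comp_min_div_div_Icc_one ha0),
      intervalIntegral.integral_const_mul, integral_inv_of_pos ha0 one_pos, one_div,
      Real.log_inv, mul_neg]
  rw [← intervalIntegral.integral_add_adjacent_intervals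
      (intervalIntegrable_comp_min_div_div_zero hω ha0)
      (intervalIntegrable_comp_min_div_div_one ha0 ha1),
    hleft, hright, sub_eq_add_neg]

end Dilation

section DilationSeries

variable {ω : ℝ → ℝ} {w a : ℕ → ℝ}

theorem summable_mul_comp_min_div (hw : Summable w) (ha0 : ∀ i, 0 < a i)
    (ha : Tendsto a atTop (𝓝 0)) {t : ℝ} (ht : 0 < t) :
    Summable fun i ↦ w i * ω (min (t / a i) 1) := by
  refine (hw.mul_right (ω 1)).congr_atTop ?_
  filter_upwards [ha.eventually (gt_mem_nhds ht)] with i hi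
  rw [min_eq_right ((one_le_div (ha0 i)).2 hi.le)]

theorem integrableOn_tsum_mul_comp_min_div_div (hnn : ∀ t ∈ Ioc (0 : ℝ) 1, 0 ≤ ω t)
    (hω : IntegrableOn (fun u ↦ ω u / u) (Ioo 0 1)) (hw0 : ∀ i, 0 ≤ w i) (hw : Summable w)
    (hwlog : Summable fun i ↦ w i * Real.log (a i)) (ha0 : ∀ i, 0 < a i) (ha1 : ∀ i, a i ≤ 1) :
    IntegrableOn (fun s ↦ (∑' i, w i * ω (min (s / a i) 1)) / s) (Ioo 0 1) := by
  have hω' : IntervalIntegrable (fun u ↦ ω u / u) volume 0 1 :=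
    (intervalIntegrable_iff_integrableOn_Ioo_of_le zero_le_one).2 hω
  set F : ℕ → ℝ → ℝ := fun i s ↦ w i * (ω (min (s / a i) 1) / s)
  have hF : ∀ i, IntegrableOn (F i) (Ioo 0 1) := fun i ↦
    ((intervalIntegrable_iff_integrableOn_Ioo_of_le zero_le_one).1
      (intervalIntegrable_comp_min_div_div hω' (ha0 i) (ha1 i))).const_mul (w i)
  have hF_norm : ∀ i, ∫ s in Ioo 0 1, ‖F i s‖ =
      w i * (∫ u in 0..1, ω u / u) - ω 1 * (w i * Real.log (a i)) := fun i ↦ by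
    rw [setIntegral_congr_fun measurableSet_Ioo fun s hs ↦ Real.norm_of_nonneg
        (mul_nonneg (hw0 i) (div_nonneg (hnn _ (min_div_one_mem_Ioc hs.1 (ha0 i))) hs.1.le)),
      integral_const_mul, ← integral_Ioc_eq_integral_Ioo,
      ← intervalIntegral.integral_of_le zero_le_one,
      integral_comp_min_div_div hω' (ha0 i) (ha1 i)]
    ring
  have hF_sum : Summable fun i ↦ ∫ s in Ioo 0 1, ‖F i s‖ :=
    ((hw.mul_right _).sub (hwlog.mul_left (ω 1))).congr fun i ↦ (hF_norm i).symm
  refine IntegrableOn.congr_fun (integrable_tsum_of_summable_integral_norm hF hF_sum)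
    (fun s _ ↦ ?_) measurableSet_Ioo
  simp only [F, ← tsum_div_const, mul_div_assoc]

theorem IsDini.tsum_mul_comp_min_div (hω : IsDini ω) (hw0 : ∀ i, 0 ≤ w i) (hw : Summable w)
    (hwlog : Summable fun i ↦ w i * Real.log (a i)) (ha0 : ∀ i, 0 < a i) (ha1 : ∀ i, a i ≤ 1)
    (ha : Tendsto a atTop (𝓝 0)) :
    IsDini (fun t ↦ ∑' i, w i * ω (min (t / a i) 1)) := by
  obtain ⟨hnn, ⟨c₁, c₂, hc₁, hc₂, hdoub⟩, hint⟩ := hω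
  have hint' := integrableOn_tsum_mul_comp_min_div_div hnn (hint 1 ⟨one_pos, le_rfl⟩) hw0 hw
    hwlog ha0 ha1
  refine ⟨fun t ht ↦ tsum_nonneg fun i ↦
      mul_nonneg (hw0 i) (hnn _ (min_div_one_mem_Ioc ht.1 (ha0 i))),
    ⟨c₁, c₂, hc₁, hc₂, IsDoubling.tsum
      (fun i ↦ (IsDoubling.comp_min_div hdoub (ha0 i)).const_mul (hw0 i))
      fun t ht ↦ summable_mul_comp_min_div hw ha0 ha ht.1⟩,
    fun t ht ↦ hint'.mono_set (Ioo_subset_Ioo_right ht.2)⟩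

end DilationSeries

theorem summable_pow_succ_mul_log_pow_succ {r : ℝ} (hr0 : 0 ≤ r) (hr1 : r < 1) (κ : ℝ) :
    Summable fun i : ℕ ↦ r ^ (i + 1) * Real.log (κ ^ (i + 1)) := by
  have h : Summable fun i : ℕ ↦ ((i + 1 : ℕ) : ℝ) ^ 1 * r ^ (i + 1) :=
    (summable_nat_add_iff (f := fun n : ℕ ↦ (n : ℝ) ^ 1 * r ^ n) 1).2
      (summable_pow_mul_geometric_of_norm_lt_one 1 (by rwa [Real.norm_of_nonneg hr0]))
  refine (h.mul_right (Real.log κ)).congr fun i ↦ ?_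
  rw [Real.log_pow]
  push_cast
  ring

theorem stmt3_general (ω : ℝ → ℝ)
    (hω : IsDini ω) (κ β : ℝ) (hκ : κ ∈ Set.Ioo (0:ℝ) 1) (hβ : β ∈ Set.Ioo (0:ℝ) 1)
    (ωt : ℝ → ℝ)
    (hωt : ∀ t ∈ Set.Ioc (0:ℝ) 1, ωt t =
      ∑' i : ℕ, κ ^ (((i : ℝ) + 1) * β) *
        (if t / κ ^ (i + 1) ≤ 1 then ω (t / κ ^ (i + 1)) else ω 1)) :
    IsDini ωt ∧ IntegrableOn (fun s => ωt s / s) (Set.Ioo 0 1) := by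
  obtain ⟨hκ0, hκ1⟩ := hκ
  set r := κ ^ β
  have hr0 : 0 ≤ r := Real.rpow_nonneg hκ0.le β
  have hr1 : r < 1 := Real.rpow_lt_one hκ0.le hκ1 hβ.1
  have hweight : ∀ i : ℕ, κ ^ (((i : ℝ) + 1) * β) = r ^ (i + 1) := fun i ↦ by
    rw [mul_comm, Real.rpow_mul hκ0.le, ← Nat.cast_succ, Real.rpow_natCast]
  have hgeom : Summable fun i : ℕ ↦ r ^ (i + 1) :=
    (summable_nat_add_iff (f := (r ^ ·)) 1).2 (summable_geometric_of_lt_one hr0 hr1)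
  have hD := hω.tsum_mul_comp_min_div (fun i ↦ pow_nonneg hr0 _) hgeom
    (summable_pow_succ_mul_log_pow_succ hr0 hr1 κ)
    (fun i ↦ pow_pos hκ0 _) (fun i ↦ pow_le_one₀ hκ0.le hκ1.le)
    ((tendsto_pow_atTop_nhds_zero_of_lt_one hκ0.le hκ1).comp (tendsto_add_atTop_nat 1))
  have hωt_eq : EqOn (fun t ↦ ∑' i : ℕ, r ^ (i + 1) * ω (min (t / κ ^ (i + 1)) 1)) ωt (Ioc 0 1) :=
    fun t ht ↦ by simp only [hωt t ht, hweight, min_def, apply_ite ω]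
  have hDini := hD.congr hωt_eq
  exact ⟨hDini, hDini.2.2 1 ⟨one_pos, le_rfl⟩⟩

theorem stmt3 (ω : ℝ → ℝ) (B : ℝ) (hbdd : ∀ t ∈ Set.Ioc (0:ℝ) 1, |ω t| ≤ B)
    (hω : IsDini ω) (κ β : ℝ) (hκ : κ ∈ Set.Ioo (0:ℝ) 1) (hβ : β ∈ Set.Ioo (0:ℝ) 1)
    (ωt : ℝ → ℝ)
    (hωt : ∀ t ∈ Set.Ioc (0:ℝ) 1, ωt t =
      ∑' i : ℕ, κ ^ (((i : ℝ) + 1) * β) *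
        (if t / κ ^ (i + 1) ≤ 1 then ω (t / κ ^ (i + 1)) else ω 1)) :
    IsDini ωt ∧ IntegrableOn (fun s => ωt s / s) (Set.Ioo 0 1) :=
  stmt3_general ω hω κ β hκ hβ ωt hωt
end

section
/- Let W ≥ 0 be locally integrable on B(0,10) ⊂ ℝⁿ satisfying the doubling property W(B(x₀,2r)) ≤ D W(B(x₀,r)) whenever B(x₀,2r) ⊂ B(0,10), where W(B) := ∫_B W dx. Suppose in addition that W has the continuity estimate |W(x) − W(y)| ≤ N r^{−n} W(B(x₀,4r)) ( r^{−β}|x−y|^β + ∫₀^{|x−y|} ω̃(t)/t dt ) for all x, y ∈ B(x₀,r), where ω̃ is a Dini function. Then for any x₀ ∈ B(0,1) and 0 < r ≤ 1, sup_{B(x₀,r)} W ≤ C ⨍_{B(x₀,r)} W, where C depends only on n, β, D, N, and ∫₀² ω̃(t)/t dt. -/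
/-!
For `x, y ∈ B(x₀, r)` we have `|x - y| < 2r ≤ 2`, so the continuity estimate bounds the oscillation
of `W` on `B(x₀, r)` by `N r⁻ⁿ W(B(x₀, 4r)) (2^β + ∫₀² ω̃(t)/t dt)`. Averaging `W x - W y` over
`y ∈ B(x₀, r)` gives `W x ≤ ⨍ W + oscillation`, and two doubling steps together with
`|B(x₀, r)| = rⁿ |B(0, 1)|` bound `r⁻ⁿ W(B(x₀, 4r))` by `D² |B(0, 1)| ⨍_{B(x₀, r)} W`.
-/

open MeasureTheory Metric Set

theorem le_setAverage_add_of_forall_sub_le {α : Type*} [MeasurableSpace α] {μ : Measure α}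
    {s : Set α} {f : α → ℝ} {a K : ℝ} (hs : MeasurableSet s) (hμ₀ : μ s ≠ 0)
    (hμ : μ s ≠ ⊤) (hf : IntegrableOn f s μ) (h : ∀ y ∈ s, a - f y ≤ K) :
    a ≤ ⨍ y in s, f y ∂μ + K := by
  have : a - K ≤ ⨍ y in s, f y ∂μ :=
    calc a - K = ⨍ _ in s, (a - K) ∂μ := (setAverage_const hμ₀ hμ _).symm
      _ ≤ ⨍ y in s, f y ∂μ := by
        simp only [setAverage_eq, smul_eq_mul]
        refine mul_le_mul_of_nonneg_left ?_ (by positivity)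
        exact setIntegral_mono_on (integrableOn_const hμ) hf hs fun y hy => by linarith [h y hy]
  linarith

theorem Real.rpow_neg_mul_rpow_le {r d c β : ℝ} (hr : 0 < r) (hd : 0 ≤ d) (hdr : d ≤ c * r)
    (hβ : 0 ≤ β) : r ^ (-β) * d ^ β ≤ c ^ β := by
  rw [Real.rpow_neg hr.le, inv_mul_eq_div, ← Real.div_rpow hd hr.le]
  exact Real.rpow_le_rpow (div_nonneg hd hr.le) ((div_le_iff₀ hr).2 hdr) hβ

theorem setIntegral_Ioo_le_of_le {f : ℝ → ℝ} {a b b' : ℝ} (hf : ∀ t ∈ Ioo a b', 0 ≤ f t)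
    (hint : IntegrableOn f (Ioo a b')) (hb : b ≤ b') :
    ∫ t in Ioo a b, f t ≤ ∫ t in Ioo a b', f t :=
  setIntegral_mono_set hint ((ae_restrict_iff' measurableSet_Ioo).2 (.of_forall hf))
    (Ioo_subset_Ioo_right hb).eventuallyLE

theorem rpow_neg_mul_rpow_add_setIntegral_Ioo_le {g : ℝ → ℝ} {r d β : ℝ}
    (hg : ∀ t ∈ Ioo 0 2, 0 ≤ g t) (hint : IntegrableOn g (Ioo 0 2)) (hr : 0 < r) (hr₁ : r ≤ 1)
    (hd : 0 ≤ d) (hdr : d ≤ 2 * r) (hβ : 0 ≤ β) :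
    r ^ (-β) * d ^ β + ∫ t in Ioo 0 d, g t ≤ 2 ^ β + ∫ t in Ioo 0 2, g t :=
  add_le_add (Real.rpow_neg_mul_rpow_le hr hd hdr hβ)
    (setIntegral_Ioo_le_of_le hg hint (by linarith))

open Module in
theorem rpow_neg_finrank_mul_setIntegral_ball {E : Type*} [NormedAddCommGroup E]
    [NormedSpace ℝ E] [MeasurableSpace E] [BorelSpace E] [FiniteDimensional ℝ E]
    (μ : Measure E) [μ.IsAddHaarMeasure] (f : E → ℝ) (x : E) {r : ℝ} (hr : 0 < r) :
    r ^ (-(finrank ℝ E : ℝ)) * ∫ y in ball x r, f y ∂μ =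
      μ.real (ball (0 : E) 1) * ⨍ y in ball x r, f y ∂μ := by
  rw [← measure_smul_setAverage f measure_ball_lt_top.ne, smul_eq_mul, measureReal_def,
    Measure.addHaar_ball_of_pos μ x hr, ENNReal.toReal_mul, ENNReal.toReal_ofReal (by positivity),
    ← measureReal_def, ← mul_assoc, ← mul_assoc, ← Real.rpow_natCast,
    ← Real.rpow_add hr, neg_add_cancel, Real.rpow_zero, one_mul]

theorem setIntegral_ball_four_mul_le {E : Type*} [PseudoMetricSpace E] [MeasurableSpace E]
    {μ : Measure E} {f : E → ℝ} {U : Set E} {D : ℝ} (hD : 0 ≤ D)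
    (hdoub : ∀ (x : E) (r : ℝ), 0 < r → ball x (2 * r) ⊆ U →
      ∫ y in ball x (2 * r), f y ∂μ ≤ D * ∫ y in ball x r, f y ∂μ)
    {x : E} {r : ℝ} (hr : 0 < r) (hU : ball x (4 * r) ⊆ U) :
    ∫ y in ball x (4 * r), f y ∂μ ≤ D ^ 2 * ∫ y in ball x r, f y ∂μ := by
  have h2U : ball x (2 * r) ⊆ U := (ball_subset_ball (by linarith)).trans hU
  have h4 : 4 * r = 2 * (2 * r) := by ring
  rw [h4] at hU ⊢
  calc ∫ y in ball x (2 * (2 * r)), f y ∂μ ≤ D * ∫ y in ball x (2 * r), f y ∂μ :=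
        hdoub x (2 * r) (by positivity) hU
    _ ≤ D * (D * ∫ y in ball x r, f y ∂μ) := by gcongr; exact hdoub x r hr h2U
    _ = D ^ 2 * ∫ y in ball x r, f y ∂μ := by ring

theorem stmt10 (n : ℕ) (D N β : ℝ) (hD : 0 < D) (hN : 0 < N) (hβ : 0 < β)
    (ωt : ℝ → ℝ) (hωt_nonneg : ∀ t ∈ Set.Ioc (0:ℝ) 2, 0 ≤ ωt t)
    (hωt_int : IntegrableOn (fun t => ωt t / t) (Set.Ioo (0:ℝ) 2)) :
    ∃ C > 0, ∀ W : EuclideanSpace ℝ (Fin n) → ℝ,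
      (∀ x, 0 ≤ W x) →
      LocallyIntegrableOn W (ball (0 : EuclideanSpace ℝ (Fin n)) 10) →
      (∀ (x₀ : EuclideanSpace ℝ (Fin n)) (r : ℝ), 0 < r →
        ball x₀ (2 * r) ⊆ ball (0 : EuclideanSpace ℝ (Fin n)) 10 →
        (∫ x in ball x₀ (2 * r), W x) ≤ D * ∫ x in ball x₀ r, W x) →
      (∀ (x₀ : EuclideanSpace ℝ (Fin n)) (r : ℝ), 0 < r →
        ball x₀ (4 * r) ⊆ ball (0 : EuclideanSpace ℝ (Fin n)) 10 →
        ∀ x ∈ ball x₀ r, ∀ y ∈ ball x₀ r,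
          |W x - W y| ≤ N * r ^ (-(n:ℝ)) * (∫ z in ball x₀ (4 * r), W z) *
            (r ^ (-β) * dist x y ^ β + ∫ t in Set.Ioo 0 (dist x y), ωt t / t)) →
      ∀ x₀ ∈ ball (0 : EuclideanSpace ℝ (Fin n)) 1, ∀ r ∈ Set.Ioc (0:ℝ) 1,
        ∀ x ∈ ball x₀ r, W x ≤ C * ⨍ z in ball x₀ r, W z := by
  have hωt_div_nonneg : ∀ t ∈ Ioo (0 : ℝ) 2, 0 ≤ ωt t / t := fun t ht =>
    div_nonneg (hωt_nonneg t ⟨ht.1, ht.2.le⟩) ht.1.le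
  set M := 2 ^ β + ∫ t in Ioo 0 2, ωt t / t
  have hM : 0 ≤ M :=
    add_nonneg (by positivity) (setIntegral_nonneg measurableSet_Ioo hωt_div_nonneg)
  set c := volume.real (ball (0 : EuclideanSpace ℝ (Fin n)) 1)
  refine ⟨1 + N * D ^ 2 * M * c, by positivity, ?_⟩
  intro W hW₀ hloc hdoub hcont x₀ hx₀ r ⟨hr₀, hr₁⟩ x hx
  have hB : ball x₀ (4 * r) ⊆ ball 0 10 := ball_subset_ball' (by linarith [mem_ball.1 hx₀])
  have hint : IntegrableOn W (ball x₀ r) :=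
    (hloc.integrableOn_compact_subset ((closedBall_subset_ball (by linarith)).trans hB)
      (isCompact_closedBall _ _)).mono_set ball_subset_closedBall
  set S := ∫ z in ball x₀ (4 * r), W z
  have hosc : ∀ y ∈ ball x₀ r, W x - W y ≤ N * r ^ (-(n:ℝ)) * S * M := by
    intro y hy
    have hxy : dist x y ≤ 2 * r :=
      (dist_triangle_right x y x₀).trans (by linarith [mem_ball.1 hx, mem_ball.1 hy])
    have hmod := rpow_neg_mul_rpow_add_setIntegral_Ioo_le hωt_div_nonneg hωt_int hr₀ hr₁
      dist_nonneg hxy hβ.le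
    have hS : 0 ≤ S := setIntegral_nonneg measurableSet_ball fun z _ => hW₀ z
    calc W x - W y ≤ |W x - W y| := le_abs_self _
      _ ≤ _ := hcont x₀ r hr₀ hB x hx y hy
      _ ≤ N * r ^ (-(n:ℝ)) * S * M := by gcongr
  have hmean := le_setAverage_add_of_forall_sub_le measurableSet_ball
    (measure_ball_pos volume x₀ hr₀).ne' measure_ball_lt_top.ne hint hosc
  set A := ⨍ z in ball x₀ r, W z
  have hS : r ^ (-(n:ℝ)) * S ≤ D ^ 2 * (c * A) := by
    have hvol := rpow_neg_finrank_mul_setIntegral_ball volume W x₀ hr₀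
    rw [finrank_euclideanSpace_fin] at hvol
    rw [← hvol, mul_left_comm]
    gcongr
    exact setIntegral_ball_four_mul_le hD.le hdoub hr₀ hB
  calc W x ≤ A + N * M * (r ^ (-(n:ℝ)) * S) := by linarith
    _ ≤ A + N * M * (D ^ 2 * (c * A)) := by gcongr
    _ = (1 + N * D ^ 2 * M * c) * A := by ring
end

section
/- Let u ∈ C¹ on closure of B⁺(0,3), and suppose for all x₀ ∈ B⁺(0,3) and 0 < r ≤ 1/4 the inequality ‖Du‖_{L^∞(B(x₀,r)∩B⁺₄)} ≤ 3^{−n} ‖Du‖_{L^∞(B(x₀,6r)∩B⁺₄)} + C r^{−n} ‖Du‖_{L¹(B(x₀,4r)∩B⁺₄)} + C M holds, where M ≥ 0 is a fixed constant. Then ‖Du‖_{L^∞(B⁺(0,2))} ≤ C' ‖Du‖_{L¹(B⁺(0,4))} + C' M, where C' depends only on n and C. -/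
/-!
On the half balls `B⁺(0, ρₖ)` with `ρₖ = 3 - 2⁻ᵏ` and radii `rₖ = 1 / (12 · 2ᵏ)`, so that
`ρₖ + 6 rₖ = ρₖ₊₁`, the local estimate gives for `Aₖ = sup_{B⁺(0,ρₖ)} |g|` the recursion
`Aₖ ≤ 3^{-(n+1)} Aₖ₊₁ + C (12 · 2ᵏ)^{n+1} ‖g‖_{L¹(B⁺₄)} + C M`.
Iterating it `N` times weights the `k`-th error term by `3^{-(n+1)k}`, which beats its growth
`2^{(n+1)k}`, and the remainder `3^{-(n+1)N} A_N` tends to `0` because `g` is continuous,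
hence bounded, on the compact set `closure B⁺₃`.
-/

open MeasureTheory Metric Set

/-- The upper half ball `B⁺(0,r) = B(0,r) ∩ {xₙ > 0}` in `ℝ^{n+1}`. -/
def halfBall (n : ℕ) (r : ℝ) : Set (EuclideanSpace ℝ (Fin (n + 1))) :=
  {x | x ∈ ball (0 : EuclideanSpace ℝ (Fin (n + 1))) r ∧ 0 < x (Fin.last n)}

open Filter

section Iteration

variable {A c : ℕ → ℝ} {θ : ℝ}

lemma le_pow_mul_add_sum_of_le_mul_succ_add (hθ : 0 ≤ θ)
    (hstep : ∀ k, A k ≤ θ * A (k + 1) + c k) (N : ℕ) :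
    A 0 ≤ θ ^ N * A N + ∑ k ∈ Finset.range N, θ ^ k * c k := by
  induction N with
  | zero => simp
  | succ N ih =>
    have h := mul_le_mul_of_nonneg_left (hstep N) (pow_nonneg hθ N)
    rw [Finset.sum_range_succ, pow_succ]
    linarith

lemma le_of_le_mul_succ_add {s : ℝ} (hθ₀ : 0 ≤ θ) (hθ₁ : θ < 1) (hA : BddAbove (range A))
    (hc : HasSum (fun k => θ ^ k * c k) s) (hstep : ∀ k, A k ≤ θ * A (k + 1) + c k) :
    A 0 ≤ s := by
  obtain ⟨K, hK⟩ := hA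
  have hbound : ∀ N, A 0 ≤ θ ^ N * K + ∑ k ∈ Finset.range N, θ ^ k * c k := fun N =>
    (le_pow_mul_add_sum_of_le_mul_succ_add hθ₀ hstep N).trans <| by
      gcongr
      exact hK (mem_range_self N)
  have hlim : Tendsto (fun N => θ ^ N * K + ∑ k ∈ Finset.range N, θ ^ k * c k) atTop
      (nhds (0 * K + s)) :=
    ((tendsto_pow_atTop_nhds_zero_of_lt_one hθ₀ hθ₁).mul_const K).add hc.tendsto_sum_nat
  simpa using ge_of_tendsto' hlim hbound

lemma hasSum_pow_mul_mul_pow_add {q a b : ℝ} (hθ₀ : 0 ≤ θ) (hθ₁ : θ < 1) (hq : 0 ≤ q)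
    (hθq : θ * q < 1) :
    HasSum (fun k => θ ^ k * (a * q ^ k + b)) (a / (1 - θ * q) + b / (1 - θ)) := by
  have h := ((hasSum_geometric_of_lt_one (mul_nonneg hθ₀ hq) hθq).mul_left a).add
    ((hasSum_geometric_of_lt_one hθ₀ hθ₁).mul_left b)
  have e : (fun k => θ ^ k * (a * q ^ k + b)) = fun k => a * (θ * q) ^ k + b * θ ^ k := by
    funext k
    rw [mul_pow]
    ring
  rwa [e, div_eq_mul_inv, div_eq_mul_inv]

end Iteration

section HalfBall

variable {n : ℕ}

lemma halfBall_mono {r s : ℝ} (h : r ≤ s) : halfBall n r ⊆ halfBall n s :=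
  fun _ hx => ⟨ball_subset_ball h hx.1, hx.2⟩

lemma halfBall_nonempty {r : ℝ} (h : 1 < r) : (halfBall n r).Nonempty := by
  refine ⟨EuclideanSpace.single (Fin.last n) 1, ?_, by simp⟩
  rw [mem_ball, dist_zero_right, PiLp.norm_single]
  simpa using h

lemma isCompact_closure_halfBall (r : ℝ) : IsCompact (closure (halfBall n r)) :=
  (isBounded_ball.subset fun _ hx => hx.1).isCompact_closure

lemma ball_inter_halfBall_subset {z : EuclideanSpace ℝ (Fin (n + 1))} {ρ s t : ℝ}
    (hz : z ∈ halfBall n ρ) : ball z s ∩ halfBall n t ⊆ halfBall n (ρ + s) := by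
  rintro y ⟨hyz, hy⟩
  refine ⟨mem_ball.mpr ?_, hy.2⟩
  linarith [dist_triangle y z 0, mem_ball.mp hyz, mem_ball.mp hz.1]

lemma bddAbove_norm_image_halfBall {E : Type*} [NormedAddCommGroup E]
    {g : EuclideanSpace ℝ (Fin (n + 1)) → E} {ρ R : ℝ}
    (hg : ContinuousOn g (closure (halfBall n R))) (hρ : ρ ≤ R) :
    BddAbove ((fun y => ‖g y‖) '' halfBall n ρ) :=
  ((isCompact_closure_halfBall R).bddAbove_image hg.norm).mono
    (image_mono ((halfBall_mono hρ).trans subset_closure))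

lemma sSup_norm_image_halfBall_mono {E : Type*} [NormedAddCommGroup E]
    {g : EuclideanSpace ℝ (Fin (n + 1)) → E} {ρ R : ℝ}
    (hg : ContinuousOn g (closure (halfBall n R))) (hρ : 1 < ρ) (hρR : ρ ≤ R) :
    sSup ((fun y => ‖g y‖) '' halfBall n ρ) ≤ sSup ((fun y => ‖g y‖) '' halfBall n R) :=
  csSup_le_csSup (bddAbove_norm_image_halfBall hg le_rfl) ((halfBall_nonempty hρ).image _)
    (image_mono (halfBall_mono hρR))

end HalfBall

lemma rpow_neg_natCast_add_one {x : ℝ} (hx : 0 ≤ x) (n : ℕ) :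
    x ^ (-((n:ℝ) + 1)) = x⁻¹ ^ (n + 1) := by
  rw [Real.rpow_neg hx, inv_pow]
  norm_cast

lemma div_one_sub_le_three_mul {a x : ℝ} (ha : 0 ≤ a) (hx : x ≤ 2 / 3) : a / (1 - x) ≤ 3 * a := by
  rw [div_le_iff₀ (by linarith)]
  nlinarith

noncomputable def iterRadius (k : ℕ) : ℝ := 3 - 2⁻¹ ^ k

lemma iterRadius_zero : iterRadius 0 = 2 := by norm_num [iterRadius]

lemma two_le_iterRadius (k : ℕ) : 2 ≤ iterRadius k := by
  rw [iterRadius]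
  linarith [pow_le_one₀ (n := k) (by norm_num : (0:ℝ) ≤ 2⁻¹) (by norm_num)]

lemma iterRadius_le_three (k : ℕ) : iterRadius k ≤ 3 := by
  rw [iterRadius]
  linarith [pow_nonneg (by norm_num : (0:ℝ) ≤ 2⁻¹) k]

lemma iterRadius_add_six_mul (k : ℕ) :
    iterRadius k + 6 * (12 * 2 ^ k : ℝ)⁻¹ = iterRadius (k + 1) := by
  rw [iterRadius, iterRadius, pow_succ, inv_pow]
  field_simp
  ring

def LocalSupEstimate (n : ℕ) (C M : ℝ)
    (g : EuclideanSpace ℝ (Fin (n + 1)) → EuclideanSpace ℝ (Fin (n + 1))) : Prop :=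
  ∀ x₀ ∈ halfBall n 3, ∀ r ∈ Set.Ioc (0:ℝ) (1/4), ∀ x ∈ ball x₀ r ∩ halfBall n 4,
    ‖g x‖ ≤ (3:ℝ) ^ (-((n:ℝ) + 1)) * sSup ((fun y => ‖g y‖) '' (ball x₀ (6 * r) ∩ halfBall n 4)) +
      C * r ^ (-((n:ℝ) + 1)) * (∫ y in ball x₀ (4 * r) ∩ halfBall n 4, ‖g y‖) + C * M

lemma sSup_norm_halfBall_le {n : ℕ} {C M ρ r : ℝ}
    {g : EuclideanSpace ℝ (Fin (n + 1)) → EuclideanSpace ℝ (Fin (n + 1))}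
    (hC : 0 ≤ C) (hint : IntegrableOn (fun y => ‖g y‖) (halfBall n 4))
    (hg : LocalSupEstimate n C M g)
    (hρ : 1 < ρ) (hρr : ρ + 6 * r ≤ 3) (hr : r ∈ Set.Ioc (0:ℝ) (1/4))
    (hbdd : BddAbove ((fun y => ‖g y‖) '' halfBall n (ρ + 6 * r))) :
    sSup ((fun y => ‖g y‖) '' halfBall n ρ) ≤
      (3:ℝ) ^ (-((n:ℝ) + 1)) * sSup ((fun y => ‖g y‖) '' halfBall n (ρ + 6 * r)) +
        C * r ^ (-((n:ℝ) + 1)) * (∫ y in halfBall n 4, ‖g y‖) + C * M := by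
  have hr₀ := hr.1
  refine csSup_le ((halfBall_nonempty hρ).image _) ?_
  rintro _ ⟨z, hz, rfl⟩
  have hz3 : z ∈ halfBall n 3 := halfBall_mono (by linarith) hz
  have hz4 : z ∈ halfBall n 4 := halfBall_mono (by norm_num) hz3
  have hsup : sSup ((fun y => ‖g y‖) '' (ball z (6 * r) ∩ halfBall n 4)) ≤
      sSup ((fun y => ‖g y‖) '' halfBall n (ρ + 6 * r)) :=
    csSup_le_csSup hbdd ⟨_, mem_image_of_mem _ ⟨mem_ball_self (by linarith), hz4⟩⟩
      (image_mono (ball_inter_halfBall_subset hz))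
  have hL1 : ∫ y in ball z (4 * r) ∩ halfBall n 4, ‖g y‖ ≤ ∫ y in halfBall n 4, ‖g y‖ :=
    setIntegral_mono_set hint (Eventually.of_forall fun _ => norm_nonneg _)
      inter_subset_right.eventuallyLE
  refine (hg z hz3 r hr z ⟨mem_ball_self hr₀, hz4⟩).trans ?_
  gcongr

lemma sSup_norm_halfBall_iterRadius_le {n : ℕ} {C M : ℝ}
    {g : EuclideanSpace ℝ (Fin (n + 1)) → EuclideanSpace ℝ (Fin (n + 1))} (hC : 0 ≤ C)
    (hcont : ContinuousOn g (closure (halfBall n 3)))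
    (hint : IntegrableOn (fun y => ‖g y‖) (halfBall n 4)) (hg : LocalSupEstimate n C M g)
    (k : ℕ) :
    sSup ((fun y => ‖g y‖) '' halfBall n (iterRadius k)) ≤
      3⁻¹ ^ (n + 1) * sSup ((fun y => ‖g y‖) '' halfBall n (iterRadius (k + 1))) +
        (C * 12 ^ (n + 1) * (∫ y in halfBall n 4, ‖g y‖) * (2 ^ (n + 1)) ^ k + C * M) := by
  have hr : (12 * 2 ^ k : ℝ)⁻¹ ∈ Ioc (0 : ℝ) (1 / 4) :=
    ⟨by positivity, by
      rw [inv_le_comm₀ (by positivity) (by norm_num)]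
      linarith [one_le_pow₀ (by norm_num : (1:ℝ) ≤ 2) (n := k)]⟩
  have h := sSup_norm_halfBall_le (ρ := iterRadius k) hC hint hg
    (by linarith [two_le_iterRadius k])
    (by rw [iterRadius_add_six_mul]; exact iterRadius_le_three _) hr
    (by rw [iterRadius_add_six_mul]; exact bddAbove_norm_image_halfBall hcont (iterRadius_le_three _))
  rw [iterRadius_add_six_mul, rpow_neg_natCast_add_one (by norm_num),
    rpow_neg_natCast_add_one (by positivity), inv_inv, mul_pow, ← pow_mul, mul_comm k, pow_mul] at h
  exact h.trans_eq (by ring)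

theorem stmt11 (n : ℕ) (C : ℝ) (hC : 0 < C) :
    ∃ C' > 0, ∀ (g : EuclideanSpace ℝ (Fin (n + 1)) → EuclideanSpace ℝ (Fin (n + 1))) (M : ℝ),
      0 ≤ M →
      ContinuousOn g (closure (halfBall n 3)) →
      IntegrableOn (fun y => ‖g y‖) (halfBall n 4) →
      (∀ x₀ ∈ halfBall n 3, ∀ r ∈ Set.Ioc (0:ℝ) (1/4), ∀ x ∈ ball x₀ r ∩ halfBall n 4,
        ‖g x‖ ≤ (3:ℝ) ^ (-((n:ℝ) + 1)) * sSup ((fun y => ‖g y‖) '' (ball x₀ (6 * r) ∩ halfBall n 4)) +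
          C * r ^ (-((n:ℝ) + 1)) * (∫ y in ball x₀ (4 * r) ∩ halfBall n 4, ‖g y‖) + C * M) →
      ∀ x ∈ halfBall n 2, ‖g x‖ ≤ C' * (∫ y in halfBall n 4, ‖g y‖) + C' * M := by
  refine ⟨3 * 12 ^ (n + 1) * C, by positivity, fun g M hM hcont hint hg x hx => ?_⟩
  set I := ∫ y in halfBall n 4, ‖g y‖
  set θ : ℝ := 3⁻¹ ^ (n + 1)
  set A : ℕ → ℝ := fun k => sSup ((fun y => ‖g y‖) '' halfBall n (iterRadius k))
  have hA : BddAbove (range A) := ⟨_, forall_mem_range.mpr fun k => sSup_norm_image_halfBall_mono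
    hcont (by linarith [two_le_iterRadius k]) (iterRadius_le_three k)⟩
  have hθq : θ * 2 ^ (n + 1) ≤ 2 / 3 := by
    rw [← mul_pow]
    exact (pow_le_of_le_one (by norm_num) (by norm_num) (by omega)).trans (by norm_num)
  have hθ : θ ≤ 2 / 3 :=
    (pow_le_of_le_one (by norm_num) (by norm_num) (by omega)).trans (by norm_num)
  have hθq1 : θ * 2 ^ (n + 1) < 1 := by linarith
  have hstep : ∀ k, A k ≤ θ * A (k + 1) + (C * 12 ^ (n + 1) * I * (2 ^ (n + 1)) ^ k + C * M) :=
    sSup_norm_halfBall_iterRadius_le hC.le hcont hint hg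
  have hA0 := le_of_le_mul_succ_add (by positivity) (by linarith) hA
    (hasSum_pow_mul_mul_pow_add (by positivity) (by linarith) (by positivity) hθq1) hstep
  have hI : 0 ≤ I := integral_nonneg fun _ => norm_nonneg _
  have hCM : C * M ≤ 12 ^ (n + 1) * (C * M) :=
    le_mul_of_one_le_left (by positivity) (one_le_pow₀ (by norm_num))
  calc ‖g x‖ ≤ A 0 := le_csSup (bddAbove_norm_image_halfBall hcont (iterRadius_le_three 0))
        ⟨x, by rwa [iterRadius_zero], rfl⟩
    _ ≤ _ := hA0
    _ ≤ 3 * (C * 12 ^ (n + 1) * I) + 3 * (C * M) := by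
      gcongr
      · exact div_one_sub_le_three_mul (by positivity) hθq
      · exact div_one_sub_le_three_mul (by positivity) hθ
    _ ≤ _ := by linarith
end
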